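/- arXiv:2007.00721 — 3 statements merged into one kernel-verified Lean document; each statement's English description precedes it below -/
import Mathlib

section
/- For every n with 0 ≤ n ≤ 2k − 1: SG(n) = 0 if n mod 4 ∈ {0,1}, and SG(n) = 1 if n mod 4 ∈ {2,3}, where SG is the Sprague–Grundy function of the game i-Mark({2},{k}) with k ≡ 3 (mod 4). (That is, the SG sequence of the interval I_0 = [0, b−1] is (0,0,1,1) repeated (b−2)/4 times followed by 0,0.) -/
/-- The minimum excludant of a finite set of naturals. -/
noncomputable def mex (s : Finset ℕ) : ℕ := sInf {x : ℕ | x ∉ s}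

/-- Sprague–Grundy function of the game i-Mark({2},{k}):
from a pile of `n ≥ 2` tokens one may subtract `2`,
or replace a positive pile size `n` divisible by `k` by `n / k`. -/
noncomputable def sg (k : ℕ) (hk : 2 ≤ k) (n : ℕ) : ℕ :=
  mex ((if h : 2 ≤ n then {sg k hk (n - 2)} else ∅) ∪
       (if h : 0 < n ∧ k ∣ n then {sg k hk (n / k)} else ∅))
termination_by n
decreasing_by
  · omega
  · exact Nat.div_lt_self h.1 hk

/-- The sequence `c_0 = 4k`, `c_m = k(c_{m−1} + 2)`. -/
def c (k : ℕ) : ℕ → ℕ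
  | 0 => 4 * k
  | m + 1 => k * (c k m + 2)

/-- The sequence `a_0 = k`, `a_m = k(a_{m−1} + 2)`. -/
def a (k : ℕ) : ℕ → ℕ
  | 0 => k
  | m + 1 => k * (a k m + 2)

lemma mex_empty : mex (∅ : Finset ℕ) = 0 := by
  apply Nat.sInf_eq_zero.mpr
  left; simp [Set.mem_setOf_eq]

lemma mex_zero : mex ({0} : Finset ℕ) = 1 := by
  unfold mex
  have hset : {x : ℕ | x ∉ ({0} : Finset ℕ)} = {x : ℕ | x ≠ 0} := by
    ext x; simp
  rw [hset]
  have h1 : (1 : ℕ) ∈ {x : ℕ | x ≠ 0} := by simp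
  have hle := Nat.sInf_le h1
  have hmem := Nat.sInf_mem (⟨1, h1⟩ : Set.Nonempty {x : ℕ | x ≠ 0})
  simp only [Set.mem_setOf_eq] at hmem
  omega

lemma mex_one : mex ({1} : Finset ℕ) = 0 := by
  apply Nat.sInf_eq_zero.mpr
  left; simp

lemma sg_pattern (k : ℕ) (hk : k % 4 = 3) (hk2 : 2 ≤ k) :
    ∀ n, n ≤ 2 * k - 1 → sg k hk2 n = if n % 4 ≤ 1 then 0 else 1 := by
  intro n
  induction n using Nat.strong_induction_on with
  | _ n ih =>
    intro hn
    rw [sg]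
    by_cases h2 : 2 ≤ n
    · by_cases hd : 0 < n ∧ k ∣ n
      · -- n is a multiple of k in [2, 2k-1], so n = k
        obtain ⟨m, rfl⟩ := hd.2
        have hm1 : m = 1 := by
          rcases Nat.lt_or_ge m 2 with h | h
          · interval_cases m
            · omega
            · rfl
          · have : k * 2 ≤ k * m := Nat.mul_le_mul_left k h
            omega
        subst hm1
        rw [dif_pos h2, dif_pos hd]
        have e1 : sg k hk2 (k * 1 - 2) = 0 := by
          rw [ih (k * 1 - 2) (by omega) (by omega)]
          simp only [Nat.mul_one]
          have : (k - 2) % 4 = 1 := by omega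
          simp [this]
        have e2 : sg k hk2 (k * 1 / k) = 0 := by
          have : k * 1 / k = 1 := by
            rw [Nat.mul_div_cancel_left 1 (by omega : 0 < k)]
          rw [this, ih 1 (by omega) (by omega)]
          simp
        rw [e1, e2, Finset.union_self, mex_zero]
        simp only [Nat.mul_one]
        have h3 : ¬ (k % 4 ≤ 1) := by omega
        simp [h3]
      · rw [dif_pos h2, dif_neg hd, Finset.union_empty]
        rw [ih (n - 2) (by omega) (by omega)]
        by_cases hm : n % 4 ≤ 1
        · have : ¬ ((n - 2) % 4 ≤ 1) := by omega
          simp only [this, if_false, if_true, hm, mex_one]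
        · have : (n - 2) % 4 ≤ 1 := by omega
          simp only [this, if_true, if_false, hm, mex_zero]
    · have hd : ¬ (0 < n ∧ k ∣ n) := by
        rintro ⟨hpos, hdvd⟩
        have := Nat.le_of_dvd hpos hdvd
        omega
      rw [dif_neg h2, dif_neg hd, Finset.union_empty, mex_empty]
      have : n % 4 ≤ 1 := by omega
      simp [this]

theorem sg_I0 (k : ℕ) (hk : k % 4 = 3) (n : ℕ) (hn : n ≤ 2 * k - 1) :
    (n % 4 = 0 ∨ n % 4 = 1 → sg k (by omega) n = 0) ∧
    (n % 4 = 2 ∨ n % 4 = 3 → sg k (by omega) n = 1) := by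
  have h := sg_pattern k hk (by omega) n hn
  constructor
  · intro hc
    rw [h]
    have : n % 4 ≤ 1 := by omega
    simp [this]
  · intro hc
    rw [h]
    have : ¬ (n % 4 ≤ 1) := by omega
    simp [this]
end

section
/- For every even m ≥ 2 and every n with c_{m−2} < n < c_{m−1}, writing r = (n − c_{m−2} − 1) mod 4: SG(n) = 0 if r ∈ {0,1}, and SG(n) = 1 if r ∈ {2,3}, where SG is the Sprague–Grundy function of the game i-Mark({2},{k}) with k ≡ 3 (mod 4). (That is, the SG sequence of the interval I_m = [c_{m−2}+1, c_{m−1}−1] for even m ≥ 2 is (0,0,1,1) repeated (c_{m−1} − c_{m−2} − 2)/4 times followed by 0.) -/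
/-! ### Auxiliary machinery -/

/-- The base pattern `(0,0,1,1)` read off `n % 4`. -/
def pat (n : ℕ) : ℕ := if n % 4 < 2 then 0 else 1

lemma pat_cases (x : ℕ) : pat x = 0 ∨ pat x = 1 := by
  unfold pat; split_ifs <;> simp

lemma pat_le (x : ℕ) : pat x ≤ 1 := by
  rcases pat_cases x with h | h <;> omega

lemma pat_flip (x : ℕ) : pat (x + 2) = 1 - pat x := by
  unfold pat; split_ifs <;> omega

lemma pat_congr {x y : ℕ} (h : x % 4 = y % 4) : pat x = pat y := by
  unfold pat; rw [h]

lemma mex_eq_of {s : Finset ℕ} {v : ℕ} (h1 : v ∉ s) (h2 : ∀ w < v, w ∈ s) : mex s = v := by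
  refine le_antisymm (Nat.sInf_le h1) ?_
  by_contra h
  push_neg at h
  exact (Nat.sInf_mem (⟨v, h1⟩ : Set.Nonempty {x : ℕ | x ∉ s})) (h2 _ h)

lemma mex_ne {a : ℕ} (ha : a ≠ 0) : mex ({a} : Finset ℕ) = 0 :=
  mex_eq_of (by simp [Ne.symm ha]) (by omega)

lemma mex_flip (x : ℕ) : mex ({pat x} : Finset ℕ) = pat (x + 2) := by
  rcases pat_cases x with h | h <;> rw [h] <;> rw [pat_flip, h]
  · exact mex_zero
  · exact mex_ne one_ne_zero

lemma mex_flip_pair (x w : ℕ) (hw : w ≠ pat (x + 2)) :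
    mex ({pat x} ∪ {w} : Finset ℕ) = pat (x + 2) := by
  have hf := pat_flip x
  rcases pat_cases x with h | h <;> rw [h] at hf ⊢ <;> rw [hf] at hw ⊢
  · refine mex_eq_of ?_ ?_
    · simp only [Finset.mem_union, Finset.mem_singleton]
      push_neg
      exact ⟨one_ne_zero, Ne.symm hw⟩
    · intro u hu
      simp only [Finset.mem_union, Finset.mem_singleton]
      omega
  · refine mex_eq_of ?_ ?_
    · simp only [Finset.mem_union, Finset.mem_singleton]
      push_neg
      exact ⟨one_ne_zero.symm, Ne.symm hw⟩
    · omega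

lemma mex_union_01 : mex (({0} ∪ {1}) : Finset ℕ) = 2 :=
  mex_eq_of (by decide) (by decide)

lemma mex_union_10 : mex (({1} ∪ {0}) : Finset ℕ) = 2 :=
  mex_eq_of (by decide) (by decide)

/-! ### Facts about `c` -/

section CFacts

variable {k : ℕ}

lemma c_step (hk : 3 ≤ k) (m : ℕ) : 3 * c k m + 6 ≤ c k (m + 1) := by
  show 3 * c k m + 6 ≤ k * (c k m + 2)
  calc 3 * c k m + 6 = 3 * (c k m + 2) := by ring
  _ ≤ k * (c k m + 2) := Nat.mul_le_mul_right _ hk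

lemma c_ge (hk : 3 ≤ k) (m : ℕ) : 4 * k + m ≤ c k m := by
  induction m with
  | zero => simp [c]
  | succ m ih =>
    have := c_step hk m
    omega

lemma c_mono (hk : 3 ≤ k) : StrictMono (c k) := by
  apply strictMono_nat_of_lt_succ
  intro m
  have := c_step hk m
  omega

lemma c_mod' (hk3 : k % 4 = 3) (m : ℕ) :
    (m % 2 = 0 ∧ c k m % 4 = 0) ∨ (m % 2 = 1 ∧ c k m % 4 = 2) := by
  induction m with
  | zero =>
    left
    constructor
    · rfl
    · show (4 * k) % 4 = 0
      omega
  | succ m ih =>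
    have h : c k (m + 1) % 4 = (k % 4) * ((c k m + 2) % 4) % 4 := by
      show (k * (c k m + 2)) % 4 = _
      rw [Nat.mul_mod]
    rw [hk3] at h
    omega

lemma c_dvd (m : ℕ) : k ∣ c k m := by
  cases m with
  | zero => exact ⟨4, by simp [c]; ring⟩
  | succ m => exact ⟨c k m + 2, rfl⟩

end CFacts

-- The claimed closed form of the Sprague–Grundy function.
open Classical in
noncomputable def F (k n : ℕ) : ℕ :=
  if n = 2 * k ∨ ∃ m, n = c k m then 2
  else if ∃ i, c k (2 * i) < n ∧ n < c k (2 * i + 1) then pat (n + 3)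
  else pat n

section FFacts

variable {k : ℕ}

lemma F_spec {n : ℕ} (h : n = 2 * k ∨ ∃ m, n = c k m) : F k n = 2 := by
  unfold F
  rw [if_pos h]

lemma F_2k : F k (2 * k) = 2 := F_spec (Or.inl rfl)

lemma F_c (m : ℕ) : F k (c k m) = 2 := F_spec (Or.inr ⟨m, rfl⟩)

lemma F_small (hk : 3 ≤ k) {n : ℕ} (h4 : n < 4 * k) (h2 : n ≠ 2 * k) : F k n = pat n := by
  unfold F
  rw [if_neg, if_neg]
  · rintro ⟨i, hi1, hi2⟩
    have := c_ge hk (2 * i)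
    omega
  · rintro (h | ⟨m, hm⟩)
    · exact h2 h
    · have := c_ge hk m
      omega

lemma F_int (hk : 3 ≤ k) {m n : ℕ} (h1 : c k m < n) (h2 : n < c k (m + 1)) :
    F k n = if m % 2 = 0 then pat (n + 3) else pat n := by
  unfold F
  rw [if_neg]
  · by_cases he : ∃ i, c k (2 * i) < n ∧ n < c k (2 * i + 1)
    · rw [if_pos he]
      obtain ⟨i, hi1, hi2⟩ := he
      have h2im : 2 * i = m := by
        by_contra hne
        rcases Nat.lt_or_ge (2 * i) m with hlt | hge
        · have : c k (2 * i + 1) ≤ c k m := (c_mono hk).monotone (by omega)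
          omega
        · have : c k (m + 1) ≤ c k (2 * i) := (c_mono hk).monotone (by omega)
          omega
      rw [if_pos (by omega)]
    · rw [if_neg he, if_neg]
      intro hm0
      exact he ⟨m / 2, by rw [show 2 * (m / 2) = m by omega]; exact ⟨h1, h2⟩⟩
  · have hge := c_ge hk m
    rintro (h | ⟨j, hj⟩)
    · omega
    · rcases Nat.lt_or_ge j (m + 1) with hlt | hge2
      · have : c k j ≤ c k m := (c_mono hk).monotone (by omega)
        omega
      · have : c k (m + 1) ≤ c k j := (c_mono hk).monotone hge2
        omega

end FFacts

lemma kq_mod4 {k : ℕ} (hk3 : k % 4 = 3) (q : ℕ) : k * q % 4 = 3 * q % 4 := by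
  have h3 : 3 * q % 4 = 3 * (q % 4) % 4 := by
    rw [Nat.mul_mod]
  rw [Nat.mul_mod, hk3, ← h3]

lemma pat_mul3 {k : ℕ} (hk3 : k % 4 = 3) (q : ℕ) : pat (k * q + 3) ≠ pat q := by
  have h := kq_mod4 hk3 q
  have hmul : (3 * q) % 4 + q % 4 = 4 ∨ (q % 4 = 0 ∧ (3 * q) % 4 = 0) := by omega
  unfold pat
  split_ifs <;> omega

lemma pat_mul0 {k : ℕ} (hk3 : k % 4 = 3) (q : ℕ) : pat (k * q) ≠ pat (q + 3) := by
  have h := kq_mod4 hk3 q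
  have hmul : (3 * q) % 4 + q % 4 = 4 ∨ (q % 4 = 0 ∧ (3 * q) % 4 = 0) := by omega
  unfold pat
  split_ifs <;> omega

/-! ### The main identification `sg = F` -/

theorem sg_eq_F (k : ℕ) (hk3 : k % 4 = 3) (hk : 2 ≤ k) (n : ℕ) : sg k hk n = F k n := by
  have hk' : 3 ≤ k := by omega
  induction n using Nat.strong_induction_on with
  | _ n ih =>
  rw [sg]
  by_cases hn4k : n < 4 * k
  · -- Region below c_0 = 4k
    by_cases hn2 : n < 2
    · -- no moves at all
      rw [dif_neg (by omega), dif_neg (by rintro ⟨h1, h2⟩; have := Nat.le_of_dvd h1 h2; omega)]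
      rw [Finset.union_empty]
      rw [F_small hk' hn4k (by omega)]
      have h0 : pat n = 0 := by unfold pat; rw [if_pos (by omega)]
      rw [h0]
      exact mex_eq_of (by simp) (by omega)
    · by_cases hn2k : n = 2 * k
      · -- n = 2k : value 2
        subst hn2k
        rw [dif_pos (by omega), dif_pos ⟨by omega, ⟨2, by ring⟩⟩]
        rw [ih (2 * k - 2) (by omega), ih (2 * k / k) (Nat.div_lt_self (by omega) (by omega))]
        have hdiv : 2 * k / k = 2 := by
          rw [Nat.mul_div_assoc 2 dvd_rfl, Nat.div_self (by omega)]
        rw [hdiv]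
        rw [F_small hk' (by omega) (by omega), F_small hk' (by omega) (by omega)]
        have h1 : pat (2 * k - 2) = 0 := by unfold pat; rw [if_pos (by omega)]
        have h2 : pat 2 = 1 := by decide
        rw [h1, h2, F_2k]
        exact mex_union_01
      · by_cases hnk : n = k
        · -- n = k
          rw [dif_pos (by omega), dif_pos ⟨by omega, by rw [hnk]⟩]
          rw [ih (n - 2) (by omega), ih (n / k) (Nat.div_lt_self (by omega) (by omega))]
          have hdiv : n / k = 1 := by rw [hnk]; exact Nat.div_self (by omega)
          rw [hdiv]
          rw [F_small hk' (by omega) (by omega), F_small hk' (by omega) (by omega)]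
          have h1 : pat (n - 2) = 0 := by unfold pat; rw [if_pos (by omega)]
          have h2 : pat 1 = 0 := by decide
          rw [h1, h2, Finset.union_self]
          rw [F_small hk' (by omega) (by omega)]
          have h3 : pat n = 1 := by unfold pat; rw [if_neg (by omega)]
          rw [h3]
          exact mex_zero
        · by_cases hn3k : n = 3 * k
          · -- n = 3k
            subst hn3k
            rw [dif_pos (by omega), dif_pos ⟨by omega, ⟨3, by ring⟩⟩]
            rw [ih (3 * k - 2) (by omega), ih (3 * k / k) (Nat.div_lt_self (by omega) (by omega))]
            have hdiv : 3 * k / k = 3 := by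
              rw [Nat.mul_div_assoc 3 dvd_rfl, Nat.div_self (by omega)]
            rw [hdiv]
            rw [F_small hk' (by omega) (by omega), F_small hk' (by omega) (by omega)]
            have h1 : pat (3 * k - 2) = 1 := by unfold pat; rw [if_neg (by omega)]
            have h2 : pat 3 = 1 := by decide
            rw [h1, h2, Finset.union_self]
            rw [F_small hk' (by omega) (by omega)]
            have h3 : pat (3 * k) = 0 := by unfold pat; rw [if_pos (by omega)]
            rw [h3]
            exact mex_ne one_ne_zero
          · -- generic n < 4k : no division move
            have hndvd : ¬ (0 < n ∧ k ∣ n) := by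
              rintro ⟨hpos, q, hq⟩
              have hq4 : q < 4 := by
                by_contra hq4
                push_neg at hq4
                have : k * 4 ≤ k * q := Nat.mul_le_mul_left _ hq4
                omega
              interval_cases q <;> omega
            rw [dif_pos (by omega), dif_neg hndvd, Finset.union_empty]
            rw [ih (n - 2) (by omega)]
            rw [F_small hk' hn4k hn2k]
            by_cases hb : n = 2 * k + 2
            · rw [show n - 2 = 2 * k by omega, F_2k]
              have h0 : pat n = 0 := by unfold pat; rw [if_pos (by omega)]
              rw [h0]
              exact mex_ne (by omega)
            · rw [F_small hk' (by omega) (by omega)]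
              have h := mex_flip (n - 2)
              rwa [show n - 2 + 2 = n by omega] at h
  · -- n ≥ 4k : locate n relative to the sequence c
    push_neg at hn4k
    have hex : ∃ j, n < c k j := ⟨n, by have := c_ge hk' n; omega⟩
    have hjlt' : n < c k (Nat.find hex) := Nat.find_spec hex
    have hj0 : Nat.find hex ≠ 0 := by
      intro h
      rw [h] at hjlt'
      have : c k 0 = 4 * k := rfl
      omega
    obtain ⟨m, hm⟩ : ∃ m, Nat.find hex = m + 1 := ⟨Nat.find hex - 1, by omega⟩
    have hjlt : n < c k (m + 1) := by rw [← hm]; exact hjlt'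
    have hle : c k m ≤ n := by
      by_contra hcon
      push_neg at hcon
      exact Nat.find_min hex (by omega) hcon
    by_cases hnc : n = c k m
    · -- n = c_m : value 2
      subst hnc
      cases m with
      | zero =>
        rw [dif_pos (by omega), dif_pos ⟨by omega, c_dvd 0⟩]
        have hc0 : c k 0 = 4 * k := rfl
        rw [ih (c k 0 - 2) (by omega), ih (c k 0 / k) (Nat.div_lt_self (by omega) (by omega))]
        have hdiv : c k 0 / k = 4 := by
          rw [hc0, show 4 * k = k * 4 by ring, Nat.mul_div_cancel_left _ (by omega)]
        rw [hdiv]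
        rw [F_small hk' (by omega) (by omega), F_small hk' (by omega) (by omega)]
        have h1 : pat (c k 0 - 2) = 1 := by unfold pat; rw [if_neg (by omega)]
        have h2 : pat 4 = 0 := by decide
        rw [h1, h2, F_c]
        exact mex_union_10
      | succ m' =>
        have hstep := c_step hk' m'
        have hcs : c k (m' + 1) = k * (c k m' + 2) := rfl
        have hge' := c_ge hk' m'
        rw [dif_pos (by omega), dif_pos ⟨by omega, c_dvd _⟩]
        rw [ih (c k (m' + 1) - 2) (by omega),
            ih (c k (m' + 1) / k) (Nat.div_lt_self (by omega) (by omega))]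
        have hdiv : c k (m' + 1) / k = c k m' + 2 := by
          rw [hcs, Nat.mul_div_cancel_left _ (by omega)]
        rw [hdiv]
        have hmod := c_mod' hk3 m'
        have hmod1 := c_mod' hk3 (m' + 1)
        have hF1 : F k (c k (m' + 1) - 2) = 1 := by
          rw [F_int hk' (m := m') (by omega) (by omega)]
          unfold pat; split_ifs <;> omega
        have hF2 : F k (c k m' + 2) = 0 := by
          rw [F_int hk' (m := m') (by omega) (by omega)]
          unfold pat; split_ifs <;> omega
        rw [hF1, hF2, F_c]
        exact mex_union_10
    · -- c_m < n < c_{m+1}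
      have hlt : c k m < n := lt_of_le_of_ne hle (Ne.symm hnc)
      have hstep := c_step hk' m
      have hge := c_ge hk' m
      have hmod := c_mod' hk3 m
      have hmod1 := c_mod' hk3 (m + 1)
      have hFn : F k n = if m % 2 = 0 then pat (n + 3) else pat n := F_int hk' hlt hjlt
      by_cases hca : n = c k m + 1
      · -- first point of the interval : only the subtraction move
        have hndvd : ¬ (0 < n ∧ k ∣ n) := by
          rintro ⟨hpos, hdvd⟩
          have h1 : k ∣ c k m := c_dvd m
          have h2 : k ∣ n - c k m := Nat.dvd_sub hdvd h1
          rw [show n - c k m = 1 by omega] at h2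
          have := Nat.le_of_dvd one_pos h2
          omega
        rw [dif_pos (by omega), dif_neg hndvd, Finset.union_empty]
        rw [ih (n - 2) (by omega)]
        have hsub : n - 2 = c k m - 1 := by omega
        cases m with
        | zero =>
          -- predecessor is 4k - 1, in the small region
          have hc0 : c k 0 = 4 * k := rfl
          rw [hsub, F_small hk' (by omega) (by omega)]
          have h1 : pat (c k 0 - 1) = 1 := by unfold pat; rw [if_neg (by omega)]
          rw [h1, hFn, if_pos (by norm_num)]
          have h0 : pat (n + 3) = 0 := by unfold pat; rw [if_pos (by omega)]
          rw [h0]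
          exact mex_ne one_ne_zero
        | succ m' =>
          have hstep' := c_step hk' m'
          have hmod' := c_mod' hk3 m'
          have hge'' := c_ge hk' m'
          rw [hsub, F_int hk' (m := m') (by omega) (by omega)]
          rw [hFn]
          by_cases h1 : m' % 2 = 0
          · -- m = m'+1 odd : F n = pat n = 1, F(c_m - 1) = pat(c_m - 1 + 3) = 0
            rw [if_pos h1, if_neg (by omega)]
            have hv : pat (c k (m' + 1) - 1 + 3) = 0 := by
              unfold pat; rw [if_pos (by omega)]
            have hv2 : pat n = 1 := by unfold pat; rw [if_neg (by omega)]
            rw [hv, hv2]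
            exact mex_zero
          · -- m = m'+1 even : F n = pat (n+3) = 0, F(c_m - 1) = pat (c_m - 1) = 1
            rw [if_neg h1, if_pos (by omega)]
            have hv : pat (c k (m' + 1) - 1) = 1 := by
              unfold pat; rw [if_neg (by omega)]
            have hv2 : pat (n + 3) = 0 := by unfold pat; rw [if_pos (by omega)]
            rw [hv, hv2]
            exact mex_ne one_ne_zero
      · by_cases hcb : n = c k m + 2
        · -- second point of the interval : the only move goes to c_m
          have hndvd : ¬ (0 < n ∧ k ∣ n) := by
            rintro ⟨hpos, hdvd⟩
            have h1 : k ∣ c k m := c_dvd m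
            have h2 : k ∣ n - c k m := Nat.dvd_sub hdvd h1
            rw [show n - c k m = 2 by omega] at h2
            have := Nat.le_of_dvd (by omega) h2
            omega
          rw [dif_pos (by omega), dif_neg hndvd, Finset.union_empty]
          rw [ih (n - 2) (by omega), show n - 2 = c k m by omega, F_c]
          have h0 : F k n = 0 := by
            rw [hFn]
            split_ifs with h1 <;> unfold pat <;> rw [if_pos (by omega)]
          rw [h0]
          exact mex_ne (by omega)
        · -- n ≥ c_m + 3
          have hn3 : c k m + 3 ≤ n := by omega
          have hFn2 : F k (n - 2) = if m % 2 = 0 then pat (n + 1) else pat (n - 2) := by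
            rw [F_int hk' (m := m) (n := n - 2) (by omega) (by omega)]
            split_ifs with h1
            · exact pat_congr (by omega)
            · rfl
          by_cases hdvd : k ∣ n
          · -- division move available : n = k * q
            obtain ⟨q, hq⟩ := hdvd
            rw [dif_pos (by omega), dif_pos ⟨by omega, ⟨q, hq⟩⟩]
            rw [ih (n - 2) (by omega), ih (n / k) (Nat.div_lt_self (by omega) (by omega))]
            have hdivq : n / k = q := by rw [hq, Nat.mul_div_cancel_left _ (by omega)]
            rw [hdivq, hFn2]
            -- bounds on q
            have hqub : q ≤ c k m + 1 := by
              have h2 : n < k * (c k m + 2) := hjlt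
              rw [hq] at h2
              have := Nat.lt_of_mul_lt_mul_left h2
              omega
            have hmul := kq_mod4 hk3 q
            have hmul2 : (3 * q) % 4 + q % 4 = 4 ∨ (q % 4 = 0 ∧ (3 * q) % 4 = 0) := by
              omega
            -- the key fact : F q differs from F n
            have hkey : F k q ≠ F k n := by
              by_cases hsp : q = 2 * k ∨ ∃ i, q = c k i
              · rw [F_spec hsp, hFn]
                split_ifs <;> have := pat_le (n + 3) <;> have := pat_le n <;> omega
              · push_neg at hsp
                by_cases hq1 : q = c k m + 1
                · -- q lies in the same interval as n
                  have hFq : F k q = if m % 2 = 0 then pat (q + 3) else pat q :=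
                    F_int hk' (by omega) (by omega)
                  rw [hFq, hFn, hq]
                  by_cases h1 : m % 2 = 0
                  · rw [if_pos h1, if_pos h1]
                    unfold pat; split_ifs <;> omega
                  · rw [if_neg h1, if_neg h1]
                    unfold pat; split_ifs <;> omega
                · have hqcm : q < c k m := by
                    have := hsp.2 m
                    omega
                  cases m with
                  | zero =>
                    -- q < 4k, q ≠ 2k : small region
                    have hc0 : c k 0 = 4 * k := rfl
                    have hFq : F k q = pat q := F_small hk' (by omega) hsp.1
                    rw [hFq, hFn, if_pos (by norm_num), hq]
                    intro hcon
                    exact pat_mul3 hk3 q hcon.symm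
                  | succ m' =>
                    have hqlb' : c k m' + 2 < q := by
                      have h5 : k * (c k m' + 2) < k * q := by rw [← hq]; exact hlt
                      exact Nat.lt_of_mul_lt_mul_left h5
                    have hFq : F k q = if m' % 2 = 0 then pat (q + 3) else pat q :=
                      F_int hk' (by omega) (by omega)
                    rw [hFq, hFn, hq]
                    by_cases h1 : m' % 2 = 0
                    · rw [if_pos h1, if_neg (by omega)]
                      intro hcon
                      exact pat_mul0 hk3 q hcon.symm
                    · rw [if_neg h1, if_pos (by omega)]
                      intro hcon
                      exact pat_mul3 hk3 q hcon.symm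
            rw [hFn] at hkey ⊢
            by_cases hpar : m % 2 = 0
            · rw [if_pos hpar] at hkey ⊢
              rw [if_pos hpar]
              have h := mex_flip_pair (n + 1) (F k q)
                (by rwa [show n + 1 + 2 = n + 3 by omega])
              rwa [show n + 1 + 2 = n + 3 by omega] at h
            · rw [if_neg hpar] at hkey ⊢
              rw [if_neg hpar]
              have hflip : pat (n - 2 + 2) = pat n := pat_congr (by omega)
              have h := mex_flip_pair (n - 2) (F k q) (by rwa [hflip])
              rwa [hflip] at h
          · -- no division move
            rw [dif_pos (by omega), dif_neg (by rintro ⟨_, hd⟩; exact hdvd hd),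
                Finset.union_empty]
            rw [ih (n - 2) (by omega), hFn2, hFn]
            by_cases hpar : m % 2 = 0
            · rw [if_pos hpar, if_pos hpar]
              have h := mex_flip (n + 1)
              rwa [show n + 1 + 2 = n + 3 by omega] at h
            · rw [if_neg hpar, if_neg hpar]
              have hflip : pat (n - 2 + 2) = pat n := pat_congr (by omega)
              rw [← hflip]
              exact mex_flip (n - 2)

theorem sg_Im_even (k : ℕ) (hk : k % 4 = 3) (m : ℕ) (hm : Even m) (hm2 : 2 ≤ m)
    (n : ℕ) (h1 : c k (m - 2) < n) (h2 : n < c k (m - 1))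
    (r : ℕ) (hr : r = (n - c k (m - 2) - 1) % 4) :
    (r = 0 ∨ r = 1 → sg k (by omega) n = 0) ∧
    (r = 2 ∨ r = 3 → sg k (by omega) n = 1) := by
  have hk' : 3 ≤ k := by omega
  have hmm : m - 1 = (m - 2) + 1 := by omega
  rw [hmm] at h2
  have hpar : (m - 2) % 2 = 0 := by
    obtain ⟨t, ht⟩ := hm
    omega
  rw [sg_eq_F k hk (by omega) n, F_int hk' h1 h2, if_pos hpar]
  have hmod := c_mod' hk (m - 2)
  have hc4 : c k (m - 2) % 4 = 0 := by omega
  refine ⟨fun hcase => ?_, fun hcase => ?_⟩ <;> unfold pat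
  · rw [if_pos (by omega)]
  · rw [if_neg (by omega)]
end

section
/- For every m ≥ 1 and every n with a_m < n < c_m, writing r = (n − a_m − 1) mod 4: SG(n) = 1 if r ∈ {0,3}, and SG(n) = 0 if r ∈ {1,2}, where SG is the Sprague–Grundy function of the game i-Mark({2},{k}) with k ≡ 1 (mod 4), k > 1. (That is, the SG sequence of the interval C_m = [a_m+1, c_m−1] is (1,0,0,1) repeated (c_m − a_m − 3)/4 times followed by 1,0.) -/
/-! ### mex computations -/

lemma mex_eq_of_s14 (s : Finset ℕ) (v : ℕ) (hv : v ∉ s) (h : ∀ u < v, u ∈ s) : mex s = v := by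
  unfold mex
  have hv' : v ∈ {x : ℕ | x ∉ s} := hv
  refine le_antisymm (Nat.sInf_le hv') ?_
  by_contra hlt
  push_neg at hlt
  have hmem := Nat.sInf_mem (⟨v, hv'⟩ : ({x : ℕ | x ∉ s}).Nonempty)
  exact hmem (h _ hlt)

lemma mex_singleton {t : ℕ} (ht : t ≤ 1) : mex {t} = 1 - t := by
  interval_cases t
  · exact mex_eq_of_s14 _ 1 (by simp) (by intro u hu; interval_cases u; simp)
  · exact mex_eq_of_s14 _ 0 (by simp) (by omega)

lemma mex_two : mex ({2} : Finset ℕ) = 0 := mex_eq_of_s14 _ 0 (by simp) (by omega)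

lemma mex_pair10 : mex ({1, 0} : Finset ℕ) = 2 :=
  mex_eq_of_s14 _ 2 (by simp) (by intro u hu; interval_cases u <;> simp)

lemma mex_pair01 : mex ({0, 1} : Finset ℕ) = 2 :=
  mex_eq_of_s14 _ 2 (by simp) (by intro u hu; interval_cases u <;> simp)

lemma mex_pair_two {t : ℕ} (ht : t ≤ 1) : mex ({1 - t, 2} : Finset ℕ) = t := by
  interval_cases t
  · exact mex_eq_of_s14 _ 0 (by simp) (by omega)
  · exact mex_eq_of_s14 _ 1 (by simp) (by intro u hu; interval_cases u; simp)

/-! ### unfolding `sg` -/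

lemma sg_eq (k : ℕ) (hk : 2 ≤ k) (n : ℕ) :
    sg k hk n = mex ((if 2 ≤ n then {sg k hk (n - 2)} else ∅) ∪
       (if 0 < n ∧ k ∣ n then {sg k hk (n / k)} else ∅)) := by
  rw [sg]
  simp only [dite_eq_ite]

lemma sg_zero (k : ℕ) (hk : 2 ≤ k) : sg k hk 0 = 0 := by
  rw [sg_eq]; norm_num [mex_empty]

lemma sg_one (k : ℕ) (hk : 2 ≤ k) : sg k hk 1 = 0 := by
  rw [sg_eq]
  have h1 : ¬ (2 ≤ 1) := by omega
  have h2 : ¬ (0 < 1 ∧ k ∣ 1) := by rintro ⟨-, h⟩; have := Nat.le_of_dvd one_pos h; omega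
  have h3 : k ≠ 1 := by omega
  simp [h1, h2, h3, mex_empty]

lemma sg_nd (k : ℕ) (hk : 2 ≤ k) (n : ℕ) (h2 : 2 ≤ n) (hnd : ¬ k ∣ n) :
    sg k hk n = mex {sg k hk (n - 2)} := by
  rw [sg_eq]
  have : ¬ (0 < n ∧ k ∣ n) := by rintro ⟨-, h⟩; exact hnd h
  simp [h2, this]

lemma sg_d (k : ℕ) (hk : 2 ≤ k) (n : ℕ) (h2 : 2 ≤ n) (hd : k ∣ n) :
    sg k hk n = mex {sg k hk (n - 2), sg k hk (n / k)} := by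
  rw [sg_eq]
  have h3 : 0 < n ∧ k ∣ n := ⟨by omega, hd⟩
  simp [h2, h3]

/-! ### the two periodic patterns -/

def pt (x : ℕ) : ℕ := if x % 4 = 0 ∨ x % 4 = 3 then 1 else 0

def q4 (x : ℕ) : ℕ := if x % 4 = 2 ∨ x % 4 = 3 then 1 else 0

lemma pt_le_one (x : ℕ) : pt x ≤ 1 := by unfold pt; split <;> omega

lemma q4_le_one (x : ℕ) : q4 x ≤ 1 := by unfold q4; split <;> omega

lemma pt_eq_one {x : ℕ} (h : x % 4 = 0 ∨ x % 4 = 3) : pt x = 1 := by unfold pt; rw [if_pos h]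

lemma pt_eq_zero {x : ℕ} (h : x % 4 = 1 ∨ x % 4 = 2) : pt x = 0 := by
  unfold pt; rw [if_neg]; omega

lemma q4_eq_one {x : ℕ} (h : x % 4 = 2 ∨ x % 4 = 3) : q4 x = 1 := by unfold q4; rw [if_pos h]

lemma q4_eq_zero {x : ℕ} (h : x % 4 = 0 ∨ x % 4 = 1) : q4 x = 0 := by
  unfold q4; rw [if_neg]; omega

lemma pt_congr {x y : ℕ} (h : x % 4 = y % 4) : pt x = pt y := by unfold pt; rw [h]

lemma pt_add_two (x : ℕ) : pt (x + 2) = 1 - pt x := by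
  unfold pt
  have h : x % 4 = 0 ∨ x % 4 = 1 ∨ x % 4 = 2 ∨ x % 4 = 3 := by omega
  have h2 : (x + 2) % 4 = (x % 4 + 2) % 4 := by omega
  rcases h with h | h | h | h <;> rw [h2, h] <;> norm_num

lemma q4_add_two (x : ℕ) : q4 (x + 2) = 1 - q4 x := by
  unfold q4
  have h : x % 4 = 0 ∨ x % 4 = 1 ∨ x % 4 = 2 ∨ x % 4 = 3 := by omega
  have h2 : (x + 2) % 4 = (x % 4 + 2) % 4 := by omega
  rcases h with h | h | h | h <;> rw [h2, h] <;> norm_num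

lemma q4_eq_pt (x : ℕ) : q4 x = pt (x + 1) := by
  unfold q4 pt
  have h : x % 4 = 0 ∨ x % 4 = 1 ∨ x % 4 = 2 ∨ x % 4 = 3 := by omega
  have h2 : (x + 1) % 4 = (x % 4 + 1) % 4 := by omega
  rcases h with h | h | h | h <;> rw [h2, h] <;> norm_num

/-! ### arithmetic facts about `a` and `c` -/

section ac
variable {k : ℕ}

lemma mul_mod4 (hk : k % 4 = 1) (x : ℕ) : (k * x) % 4 = x % 4 := by
  rw [Nat.mul_mod, hk, one_mul]; omega

lemma pow_mod4 (hk : k % 4 = 1) (e : ℕ) : (k ^ e) % 4 = 1 % 4 := by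
  rw [Nat.pow_mod, hk]; simp

lemma mulk_mod4 (hk : k % 4 = 1) (x e : ℕ) : (x * k ^ e) % 4 = x % 4 := by
  rw [Nat.mul_mod, pow_mod4 hk]
  simp

lemma c_eq (m : ℕ) : c k m = a k m + 3 * k ^ (m + 1) := by
  induction m with
  | zero => show 4 * k = k + 3 * k ^ 1; ring
  | succ m ih => show k * (c k m + 2) = k * (a k m + 2) + 3 * k ^ (m + 2); rw [ih]; ring

lemma a_succ_eq (hk1 : 2 ≤ k) (m : ℕ) : a k (m + 1) = c k m + (k - 2) * k ^ (m + 1) := by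
  induction m with
  | zero =>
    show k * (k + 2) = 4 * k + (k - 2) * k ^ 1
    obtain ⟨j, rfl⟩ : ∃ j, k = j + 2 := ⟨k - 2, by omega⟩
    simp only [pow_one, Nat.add_sub_cancel]; ring
  | succ m ih =>
    show k * (a k (m+1) + 2) = k * (c k m + 2) + (k - 2) * k ^ (m + 2)
    rw [ih]; ring

lemma k_le_pow (hk1 : 2 ≤ k) (m : ℕ) : k ≤ k ^ (m + 1) := by
  calc k = k ^ 1 := (pow_one k).symm
    _ ≤ k ^ (m + 1) := Nat.pow_le_pow_right (by omega) (by omega)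

lemma a_ge (m : ℕ) : k ≤ a k m := by
  induction m with
  | zero => exact le_refl _
  | succ m ih =>
    show k ≤ k * (a k m + 2)
    exact Nat.le_mul_of_pos_right k (by omega)

lemma a_succ_ge (m : ℕ) : k * (k + 2) ≤ a k (m + 1) := by
  show k * (k + 2) ≤ k * (a k m + 2)
  exact Nat.mul_le_mul_left k (by have := a_ge (k := k) m; omega)

lemma a_dvd (m : ℕ) : k ∣ a k m := by
  cases m with
  | zero => exact dvd_refl k
  | succ m => exact Dvd.intro _ rfl

lemma not_dvd_add {x r : ℕ} (hd : k ∣ x) (h1 : 0 < r) (h2 : r < k) : ¬ k ∣ (x + r) := by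
  intro h
  have hr : k ∣ r := (Nat.dvd_add_right hd).mp h
  exact absurd (Nat.le_of_dvd h1 hr) (by omega)

lemma dvd_gap {x y : ℕ} (hx : k ∣ x) (hy : k ∣ y) (hxy : x < y) : x + k ≤ y := by
  have h : k ∣ y - x := Nat.dvd_sub hy hx
  have := Nat.le_of_dvd (by omega) h
  omega

lemma cancel_lt {x y : ℕ} (h : k * x < k * y) : x < y := Nat.lt_of_mul_lt_mul_left h

lemma lt_mul_self' (hk : 2 ≤ k) {x : ℕ} (hx : 1 ≤ x) : x < k * x := by
  have := Nat.mul_le_mul_right x hk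
  omega

end ac

/-! ### main characterization -/

def Pk (k : ℕ) (hk2 : 2 ≤ k) (n : ℕ) : Prop :=
  (n < k → sg k hk2 n = q4 n) ∧
  (∀ m, n = a k m → sg k hk2 n = 2) ∧
  (n = 2 * k → sg k hk2 n = 2) ∧
  (∀ m, n = c k m → sg k hk2 n = 2) ∧
  (∀ m, a k m < n → n < c k m → n ≠ 2 * k → sg k hk2 n = pt (n - a k m - 1)) ∧
  (∀ m, c k m < n → n < a k (m + 1) → sg k hk2 n = pt (n - c k m - 1))

lemma sg_main (k : ℕ) (hk : k % 4 = 1) (hk1 : 1 < k) (hk2 : 2 ≤ k) (n : ℕ) :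
    Pk k hk2 n := by
  induction n using Nat.strong_induction_on with
  | _ n ih =>
  have hk5 : 5 ≤ k := by omega
  have IH1 : ∀ j, j < n → j < k → sg k hk2 j = q4 j := fun j hj h => (ih j hj).1 h
  have IH2 : ∀ j, j < n → ∀ m, j = a k m → sg k hk2 j = 2 := fun j hj m h => (ih j hj).2.1 m h
  have IH3 : ∀ j, j < n → j = 2 * k → sg k hk2 j = 2 := fun j hj h => (ih j hj).2.2.1 h
  have IH4 : ∀ j, j < n → ∀ m, j = c k m → sg k hk2 j = 2 := fun j hj m h => (ih j hj).2.2.2.1 m h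
  have IH5 : ∀ j, j < n → ∀ m, a k m < j → j < c k m → j ≠ 2 * k →
      sg k hk2 j = pt (j - a k m - 1) := fun j hj m h1 h2 h3 => (ih j hj).2.2.2.2.1 m h1 h2 h3
  have IH6 : ∀ j, j < n → ∀ m, c k m < j → j < a k (m + 1) →
      sg k hk2 j = pt (j - c k m - 1) := fun j hj m h1 h2 => (ih j hj).2.2.2.2.2 m h1 h2
  refine ⟨?_, ?_, ?_, ?_, ?_, ?_⟩
  · -- Clause 1 : n < k
    intro hnk
    rcases Nat.lt_or_ge n 2 with h2 | h2
    · interval_cases n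
      · rw [sg_zero]; exact (q4_eq_zero (by omega)).symm
      · rw [sg_one]; exact (q4_eq_zero (by omega)).symm
    · have hnd : ¬ k ∣ n := fun h => absurd (Nat.le_of_dvd (by omega) h) (by omega)
      rw [sg_nd k hk2 n h2 hnd, IH1 (n-2) (by omega) (by omega),
        mex_singleton (q4_le_one _)]
      have h := q4_add_two (n - 2)
      have e : n - 2 + 2 = n := by omega
      rw [e] at h
      have := q4_le_one (n - 2)
      omega
  · -- Clause 2 : n = a_m
    intro m hm
    cases m with
    | zero =>
      have ha0 : a k 0 = k := rfl
      have hnk : n = k := by omega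
      rw [sg_d k hk2 n (by omega) (hnk ▸ dvd_refl k)]
      have hdiv : n / k = 1 := by rw [hnk, Nat.div_self (by omega)]
      rw [hdiv, sg_one, IH1 (n - 2) (by omega) (by omega)]
      rw [q4_eq_one (by omega)]
      exact mex_pair10
    | succ m' =>
      have hA : a k (m' + 1) = k * (a k m' + 2) := rfl
      have hca : a k (m' + 1) = c k m' + (k - 2) * k ^ (m' + 1) := a_succ_eq hk2 m'
      have hpow : k ≤ k ^ (m' + 1) := k_le_pow hk2 m'
      have hgap : 3 * k ≤ (k - 2) * k ^ (m' + 1) := Nat.mul_le_mul (by omega) hpow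
      have hmodk2 : ((k - 2) * k ^ (m' + 1)) % 4 = (k - 2) % 4 := mulk_mod4 hk _ _
      have hceq : c k m' = a k m' + 3 * k ^ (m' + 1) := c_eq m'
      have hag : k ≤ a k m' := a_ge m'
      -- subtraction move : n - 2 lies in (c_{m'}, a_{m'+1})
      have h6 := IH6 (n - 2) (by omega) m' (by omega) (by omega)
      have hpt6 : pt (n - 2 - c k m' - 1) = 1 := pt_eq_one (by omega)
      -- division move : a_{m'} + 2 lies in (a_{m'}, c_{m'})
      have hane : a k m' + 2 ≠ 2 * k := by
        intro h
        have hgap2 := dvd_gap (a_dvd m') (dvd_mul_left k 2) (show a k m' < 2 * k by omega)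
        omega
      have hmul : a k m' + 2 < k * (a k m' + 2) := lt_mul_self' hk2 (by omega)
      have h5 := IH5 (a k m' + 2) (by omega) m' (by omega) (by omega) hane
      have hpt5 : pt (a k m' + 2 - a k m' - 1) = 0 := pt_eq_zero (by omega)
      have hdvd : k ∣ n := ⟨a k m' + 2, by omega⟩
      rw [sg_d k hk2 n (by omega) hdvd]
      have hdiv : n / k = a k m' + 2 := by
        rw [show n = k * (a k m' + 2) by omega, Nat.mul_div_cancel_left _ (by omega : 0 < k)]
      rw [hdiv, h6, hpt6, h5, hpt5]
      exact mex_pair10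
  · -- Clause 3 : n = 2k
    intro hm
    have ha0 : a k 0 = k := rfl
    have hc0 : c k 0 = 4 * k := rfl
    rw [sg_d k hk2 n (by omega) ⟨2, by omega⟩]
    have hdiv : n / k = 2 := by rw [show n = k * 2 by omega, Nat.mul_div_cancel_left _ (by omega : 0 < k)]
    have h5 := IH5 (n - 2) (by omega) 0 (by omega) (by omega) (by omega)
    have hpt5 : pt (n - 2 - a k 0 - 1) = 0 := pt_eq_zero (by omega)
    rw [hdiv, h5, hpt5, IH1 2 (by omega) (by omega), q4_eq_one (by omega)]
    exact mex_pair01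
  · -- Clause 4 : n = c_m
    intro m hm
    cases m with
    | zero =>
      have ha0 : a k 0 = k := rfl
      have hc0 : c k 0 = 4 * k := rfl
      rw [sg_d k hk2 n (by omega) ⟨4, by omega⟩]
      have hdiv : n / k = 4 := by rw [show n = k * 4 by omega, Nat.mul_div_cancel_left _ (by omega : 0 < k)]
      have h5 := IH5 (n - 2) (by omega) 0 (by omega) (by omega) (by omega)
      have hpt5 : pt (n - 2 - a k 0 - 1) = 1 := pt_eq_one (by omega)
      rw [hdiv, h5, hpt5, IH1 4 (by omega) (by omega), q4_eq_zero (by omega)]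
      exact mex_pair10
    | succ m' =>
      have hC : c k (m' + 1) = k * (c k m' + 2) := rfl
      have hca : a k (m' + 1) = c k m' + (k - 2) * k ^ (m' + 1) := a_succ_eq hk2 m'
      have hceq2 : c k (m' + 1) = a k (m' + 1) + 3 * k ^ (m' + 2) := c_eq (m' + 1)
      have hceq : c k m' = a k m' + 3 * k ^ (m' + 1) := c_eq m'
      have hpow : k ≤ k ^ (m' + 1) := k_le_pow hk2 m'
      have hpow2 : k ≤ k ^ (m' + 2) := k_le_pow hk2 (m' + 1)
      have hgap : 3 * k ≤ (k - 2) * k ^ (m' + 1) := Nat.mul_le_mul (by omega) hpow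
      have hmod3 : (3 * k ^ (m' + 2)) % 4 = 3 % 4 := mulk_mod4 hk _ _
      have hag : k ≤ a k m' := a_ge m'
      have hsg : k * (k + 2) ≤ a k (m' + 1) := a_succ_ge m'
      have hsg2 : 5 * (k + 2) ≤ k * (k + 2) := Nat.mul_le_mul_right _ (by omega)
      -- subtraction move : n - 2 in (a_{m'+1}, c_{m'+1}), not 2k
      have h5 := IH5 (n - 2) (by omega) (m' + 1) (by omega) (by omega) (by omega)
      have hpt5 : pt (n - 2 - a k (m' + 1) - 1) = 1 := pt_eq_one (by omega)
      -- division move : c_{m'} + 2 in (c_{m'}, a_{m'+1})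
      have hmul : c k m' + 2 < k * (c k m' + 2) := lt_mul_self' hk2 (by omega)
      have h6 := IH6 (c k m' + 2) (by omega) m' (by omega) (by omega)
      have hpt6 : pt (c k m' + 2 - c k m' - 1) = 0 := pt_eq_zero (by omega)
      rw [sg_d k hk2 n (by omega) ⟨c k m' + 2, by omega⟩]
      have hdiv : n / k = c k m' + 2 := by
        rw [show n = k * (c k m' + 2) by omega, Nat.mul_div_cancel_left _ (by omega : 0 < k)]
      rw [hdiv, h5, hpt5, h6, hpt6]
      exact mex_pair10
  · -- Clause 5 : a_m < n < c_m, n ≠ 2k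
    intro m hma hmc hne
    have hceq : c k m = a k m + 3 * k ^ (m + 1) := c_eq m
    have hpow : k ≤ k ^ (m + 1) := k_le_pow hk2 m
    have hmod3 : (3 * k ^ (m + 1)) % 4 = 3 % 4 := mulk_mod4 hk _ _
    have hAd : k ∣ a k m := a_dvd m
    have hag : k ≤ a k m := a_ge m
    rcases eq_or_lt_of_le (show a k m + 1 ≤ n by omega) with h1 | h1
    · -- n = a_m + 1
      have hnd : ¬ k ∣ n := by
        rw [show n = a k m + 1 by omega]; exact not_dvd_add hAd (by omega) (by omega)
      rw [sg_nd k hk2 n (by omega) hnd]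
      have hsub : sg k hk2 (n - 2) = 0 := by
        cases m with
        | zero =>
          have ha0 : a k 0 = k := rfl
          rw [IH1 (n - 2) (by omega) (by omega)]
          exact q4_eq_zero (by omega)
        | succ m' =>
          have hca : a k (m' + 1) = c k m' + (k - 2) * k ^ (m' + 1) := a_succ_eq hk2 m'
          have hgap : 3 * k ≤ (k - 2) * k ^ (m' + 1) := Nat.mul_le_mul (by omega) (k_le_pow hk2 m')
          have hmodk2 : ((k - 2) * k ^ (m' + 1)) % 4 = (k - 2) % 4 := mulk_mod4 hk _ _
          rw [IH6 (n - 2) (by omega) m' (by omega) (by omega)]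
          exact pt_eq_zero (by omega)
      rw [hsub, mex_singleton (by omega)]
      exact (pt_eq_one (by omega)).symm
    · rcases eq_or_lt_of_le (show a k m + 2 ≤ n from h1) with h2 | h2
      · -- n = a_m + 2
        have hnd : ¬ k ∣ n := by
          rw [show n = a k m + 2 by omega]; exact not_dvd_add hAd (by omega) (by omega)
        rw [sg_nd k hk2 n (by omega) hnd, IH2 (n - 2) (by omega) m (by omega), mex_two]
        exact (pt_eq_zero (by omega)).symm
      · -- n ≥ a_m + 3
        have hflip : pt (n - 2 - a k m - 1) = 1 - pt (n - a k m - 1) := by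
          have h := pt_add_two (n - 2 - a k m - 1)
          rw [show n - 2 - a k m - 1 + 2 = n - a k m - 1 by omega] at h
          have := pt_le_one (n - 2 - a k m - 1)
          have := pt_le_one (n - a k m - 1)
          omega
        by_cases hd : k ∣ n
        · -- division move available
          obtain ⟨q, hq⟩ := hd
          have hq0 : q ≠ 0 := by rintro rfl; omega
          have hqn : q < n := by rw [hq]; exact lt_mul_self' hk2 (by omega)
          have hn2 : sg k hk2 (n - 2) = pt (n - 2 - a k m - 1) := by
            refine IH5 (n - 2) (by omega) m (by omega) (by omega) ?_
            intro h
            have := dvd_gap (dvd_mul_left k 2) ⟨q, hq⟩ (show 2 * k < n by omega)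
            omega
          have hkey : sg k hk2 q = sg k hk2 (n - 2) ∨ sg k hk2 q = 2 := by
            cases m with
            | zero =>
              have ha0 : a k 0 = k := rfl
              have hc0 : c k 0 = 4 * k := rfl
              have hq4 : q < 4 := cancel_lt (show k * q < k * 4 by omega)
              have hq1 : 1 < q := cancel_lt (show k * 1 < k * q by omega)
              have hq2 : q ≠ 2 := by rintro rfl; omega
              have hq3 : q = 3 := by omega
              have hn3 : n = k * 3 := by rw [hq, hq3]
              left
              rw [hq3, IH1 3 (by omega) (by omega), hn2, q4_eq_one (by omega),
                pt_eq_one (by omega)]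
            | succ m' =>
              have hA : a k (m' + 1) = k * (a k m' + 2) := rfl
              have hC : c k (m' + 1) = k * (c k m' + 2) := rfl
              have hceq' : c k m' = a k m' + 3 * k ^ (m' + 1) := c_eq m'
              have hca : a k (m' + 1) = c k m' + (k - 2) * k ^ (m' + 1) := a_succ_eq hk2 m'
              have hpow' : k ≤ k ^ (m' + 1) := k_le_pow hk2 m'
              have hgap : 3 * k ≤ (k - 2) * k ^ (m' + 1) := Nat.mul_le_mul (by omega) hpow'
              have hmod3' : (3 * k ^ (m' + 1)) % 4 = 3 % 4 := mulk_mod4 hk _ _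
              have hql : a k m' + 2 < q := cancel_lt (show k * (a k m' + 2) < k * q by omega)
              have hqu : q < c k m' + 2 := cancel_lt (show k * q < k * (c k m' + 2) by omega)
              obtain ⟨d, hdq⟩ : ∃ d, q = a k m' + 2 + d + 1 := ⟨q - a k m' - 3, by omega⟩
              have hE : n = a k (m' + 1) + k * (d + 1) := by rw [hq, hA, hdq]; ring
              have hdm : (k * (d + 1)) % 4 = (d + 1) % 4 := mul_mod4 hk _
              rcases lt_trichotomy q (c k m') with hqc | hqc | hqc
              · by_cases hq2k : q = 2 * k
                · right; exact IH3 q (by omega) hq2k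
                · left
                  rw [IH5 q (by omega) m' (by omega) (by omega) hq2k, hn2]
                  exact pt_congr (by omega)
              · right; exact IH4 q (by omega) m' hqc
              · have hqe : q = c k m' + 1 := by omega
                left
                rw [IH6 q (by omega) m' (by omega) (by omega), hn2,
                  pt_eq_one (by omega), pt_eq_one (by omega)]
          rw [sg_d k hk2 n (by omega) ⟨q, hq⟩,
            show n / k = q by rw [hq, Nat.mul_div_cancel_left _ (by omega : 0 < k)]]
          rcases hkey with h | h
          · rw [h, hn2, hflip, show ({1 - pt (n - a k m - 1), 1 - pt (n - a k m - 1)} : Finset ℕ)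
              = {1 - pt (n - a k m - 1)} from Finset.insert_eq_self.2 (Finset.mem_singleton_self _),
              mex_singleton (by have := pt_le_one (n - a k m - 1); omega)]
            have := pt_le_one (n - a k m - 1); omega
          · rw [hn2, hflip, h, mex_pair_two (pt_le_one _)]
        · -- no division move
          rw [sg_nd k hk2 n (by omega) hd]
          by_cases hb : n - 2 = 2 * k
          · have hm0 : m = 0 := by
              cases m with
              | zero => rfl
              | succ m' =>
                exfalso
                have h1' := a_succ_ge (k := k) m'
                have h2' : 5 * (k + 2) ≤ k * (k + 2) := Nat.mul_le_mul_right _ (by omega)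
                omega
            subst hm0
            have ha0 : a k 0 = k := rfl
            rw [IH3 (n - 2) (by omega) hb, mex_two]
            exact (pt_eq_zero (by omega)).symm
          · rw [IH5 (n - 2) (by omega) m (by omega) (by omega) hb, hflip,
              mex_singleton (by have := pt_le_one (n - a k m - 1); omega)]
            have := pt_le_one (n - a k m - 1); omega
  · -- Clause 6 : c_m < n < a_{m+1}
    intro m hmc hma
    have hceq : c k m = a k m + 3 * k ^ (m + 1) := c_eq m
    have haca : a k (m + 1) = c k m + (k - 2) * k ^ (m + 1) := a_succ_eq hk2 m
    have hpow : k ≤ k ^ (m + 1) := k_le_pow hk2 m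
    have hgap : 3 * k ≤ (k - 2) * k ^ (m + 1) := Nat.mul_le_mul (by omega) hpow
    have hmod3 : (3 * k ^ (m + 1)) % 4 = 3 % 4 := mulk_mod4 hk _ _
    have hmodk2 : ((k - 2) * k ^ (m + 1)) % 4 = (k - 2) % 4 := mulk_mod4 hk _ _
    have hCd : k ∣ c k m := c_dvd m
    have hag : k ≤ a k m := a_ge m
    rcases eq_or_lt_of_le (show c k m + 1 ≤ n by omega) with h1 | h1
    · -- n = c_m + 1
      have hnd : ¬ k ∣ n := by
        rw [show n = c k m + 1 by omega]; exact not_dvd_add hCd (by omega) (by omega)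
      rw [sg_nd k hk2 n (by omega) hnd,
        IH5 (n - 2) (by omega) m (by omega) (by omega) (by omega),
        pt_eq_zero (by omega), mex_singleton (by omega)]
      exact (pt_eq_one (by omega)).symm
    · rcases eq_or_lt_of_le (show c k m + 2 ≤ n from h1) with h2 | h2
      · -- n = c_m + 2
        have hnd : ¬ k ∣ n := by
          rw [show n = c k m + 2 by omega]; exact not_dvd_add hCd (by omega) (by omega)
        rw [sg_nd k hk2 n (by omega) hnd, IH4 (n - 2) (by omega) m (by omega), mex_two]
        exact (pt_eq_zero (by omega)).symm
      · -- n ≥ c_m + 3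
        have hflip : pt (n - 2 - c k m - 1) = 1 - pt (n - c k m - 1) := by
          have h := pt_add_two (n - 2 - c k m - 1)
          rw [show n - 2 - c k m - 1 + 2 = n - c k m - 1 by omega] at h
          have := pt_le_one (n - 2 - c k m - 1)
          have := pt_le_one (n - c k m - 1)
          omega
        by_cases hd : k ∣ n
        · obtain ⟨q, hq⟩ := hd
          have hq0 : q ≠ 0 := by rintro rfl; omega
          have hqn : q < n := by rw [hq]; exact lt_mul_self' hk2 (by omega)
          have hn2 : sg k hk2 (n - 2) = pt (n - 2 - c k m - 1) :=
            IH6 (n - 2) (by omega) m (by omega) (by omega)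
          have hkey : sg k hk2 q = sg k hk2 (n - 2) ∨ sg k hk2 q = 2 := by
            cases m with
            | zero =>
              have ha0 : a k 0 = k := rfl
              have hc0 : c k 0 = 4 * k := rfl
              have hA1 : a k (0 + 1) = k * (k + 2) := rfl
              have hql : 4 < q := cancel_lt (show k * 4 < k * q by omega)
              have hqu : q < k + 2 := cancel_lt (show k * q < k * (k + 2) by omega)
              obtain ⟨d, hdq⟩ : ∃ d, q = 4 + d + 1 := ⟨q - 5, by omega⟩
              have hE : n = 4 * k + k * (d + 1) := by rw [hq, hdq]; ring
              have hdm : (k * (d + 1)) % 4 = (d + 1) % 4 := mul_mod4 hk _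
              rcases lt_trichotomy q k with hqk | hqk | hqk
              · left
                rw [IH1 q (by omega) hqk, hn2, q4_eq_pt]
                exact pt_congr (by omega)
              · right; exact IH2 q (by omega) 0 (by omega)
              · have hqe : q = k + 1 := by omega
                left
                rw [IH5 q (by omega) 0 (by omega) (by omega) (by omega), hn2,
                  pt_eq_one (by omega), pt_eq_one (by omega)]
            | succ m' =>
              have hC : c k (m' + 1) = k * (c k m' + 2) := rfl
              have hA2 : a k (m' + 1 + 1) = k * (a k (m' + 1) + 2) := rfl
              have hceq' : c k (m' + 1) = a k (m' + 1) + 3 * k ^ (m' + 1 + 1) := c_eq (m' + 1)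
              have hca' : a k (m' + 1) = c k m' + (k - 2) * k ^ (m' + 1) := a_succ_eq hk2 m'
              have hmodk2' : ((k - 2) * k ^ (m' + 1)) % 4 = (k - 2) % 4 := mulk_mod4 hk _ _
              have hpow2 : k ≤ k ^ (m' + 1 + 1) := k_le_pow hk2 (m' + 1)
              have hmod3'' : (3 * k ^ (m' + 1 + 1)) % 4 = 3 % 4 := mulk_mod4 hk _ _
              have hsg : k * (k + 2) ≤ a k (m' + 1) := a_succ_ge m'
              have hsg2 : 5 * (k + 2) ≤ k * (k + 2) := Nat.mul_le_mul_right _ (by omega)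
              have hql : c k m' + 2 < q := cancel_lt (show k * (c k m' + 2) < k * q by omega)
              have hqu : q < a k (m' + 1) + 2 :=
                cancel_lt (show k * q < k * (a k (m' + 1) + 2) by omega)
              obtain ⟨d, hdq⟩ : ∃ d, q = c k m' + 2 + d + 1 := ⟨q - c k m' - 3, by omega⟩
              have hE : n = c k (m' + 1) + k * (d + 1) := by rw [hq, hC, hdq]; ring
              have hdm : (k * (d + 1)) % 4 = (d + 1) % 4 := mul_mod4 hk _
              rcases lt_trichotomy q (a k (m' + 1)) with hqa | hqa | hqa
              · left
                rw [IH6 q (by omega) m' (by omega) (by omega), hn2]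
                exact pt_congr (by omega)
              · right; exact IH2 q (by omega) (m' + 1) hqa
              · have hqe : q = a k (m' + 1) + 1 := by omega
                left
                rw [IH5 q (by omega) (m' + 1) (by omega) (by omega) (by omega), hn2,
                  pt_eq_one (by omega), pt_eq_one (by omega)]
          rw [sg_d k hk2 n (by omega) ⟨q, hq⟩,
            show n / k = q by rw [hq, Nat.mul_div_cancel_left _ (by omega : 0 < k)]]
          rcases hkey with h | h
          · rw [h, hn2, hflip, show ({1 - pt (n - c k m - 1), 1 - pt (n - c k m - 1)} : Finset ℕ)
              = {1 - pt (n - c k m - 1)} from Finset.insert_eq_self.2 (Finset.mem_singleton_self _),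
              mex_singleton (by have := pt_le_one (n - c k m - 1); omega)]
            have := pt_le_one (n - c k m - 1); omega
          · rw [hn2, hflip, h, mex_pair_two (pt_le_one _)]
        · rw [sg_nd k hk2 n (by omega) hd,
            IH6 (n - 2) (by omega) m (by omega) (by omega), hflip,
            mex_singleton (by have := pt_le_one (n - c k m - 1); omega)]
          have := pt_le_one (n - c k m - 1); omega

theorem sg_Cm (k : ℕ) (hk : k % 4 = 1) (hk1 : 1 < k) (m : ℕ) (hm : 1 ≤ m) (n : ℕ)
    (h1 : a k m < n) (h2 : n < c k m) (r : ℕ) (hr : r = (n - a k m - 1) % 4) :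
    (r = 0 ∨ r = 3 → sg k (by omega) n = 1) ∧
    (r = 1 ∨ r = 2 → sg k (by omega) n = 0) := by
  have hk2 : 2 ≤ k := by omega
  have hne : n ≠ 2 * k := by
    obtain ⟨m', rfl⟩ : ∃ m', m = m' + 1 := ⟨m - 1, by omega⟩
    have h1' := a_succ_ge (k := k) m'
    have h2' : 5 * (k + 2) ≤ k * (k + 2) := Nat.mul_le_mul_right _ (by omega)
    omega
  have h5 := (sg_main k hk hk1 hk2 n).2.2.2.2.1 m h1 h2 hne
  constructor
  · intro hc
    exact h5.trans (pt_eq_one (by omega))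
  · intro hc
    exact h5.trans (pt_eq_zero (by omega))
end
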